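/- Let D* be a minimal strongly connected digraph, v a linear vertex with unique in-neighbor u and unique out-neighbor w, and u ≠ w. If there is no directed path from u to w in D* other than the path u, v, w, then the digraph D obtained from D* by deleting v and its two incident arcs and adding the arc (u,w) is minimal strongly connected. -/

import Mathlib

/-- Reachability in a digraph given by its arc set `A`. -/
def Reach {α : Type*} (A : Finset (α × α)) (u v : α) : Prop :=
  Relation.ReflTransGen (fun a b => (a, b) ∈ A) u v

/-- A digraph with vertex set `V` and arc set `A` is strongly connected if
every vertex reaches every other vertex by a directed path. -/
def StrongConn {α : Type*} (V : Finset α) (A : Finset (α × α)) : Prop :=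
  ∀ u ∈ V, ∀ v ∈ V, Reach A u v

/-- Minimal strongly connected: strongly connected and removing any arc
destroys strong connectivity. -/
def MSC {α : Type*} [DecidableEq α] (V : Finset α) (A : Finset (α × α)) : Prop :=
  StrongConn V A ∧ ∀ a ∈ A, ¬ StrongConn V (A.erase a)

/-- `l` is a directed (simple) path from `u` to `v` in the digraph with arc set `A`. -/
def IsPath {α : Type*} (A : Finset (α × α)) (u v : α) (l : List α) : Prop :=
  l.Chain' (fun a b => (a, b) ∈ A) ∧ l.head? = some u ∧ l.getLast? = some v ∧ l.Nodup

/-- `(u,v)` is a transitive arc: it is an arc and there is a directed path from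
`u` to `v` distinct from the single arc `(u,v)`. -/
def TransArc {α : Type*} (A : Finset (α × α)) (u v : α) : Prop :=
  (u, v) ∈ A ∧ ∃ l, IsPath A u v l ∧ l ≠ [u, v]

/-- `l` (a list of distinct vertices, of length ≥ 2) is a directed cycle:
consecutive vertices are joined by arcs, and there is an arc from the last
vertex back to the first. -/
def IsCycle {α : Type*} (A : Finset (α × α)) (l : List α) : Prop :=
  ∃ h : l ≠ [], l.Nodup ∧ 2 ≤ l.length ∧
    List.Chain (fun a b => (a, b) ∈ A) (l.getLast h) l

/-- Well-formedness: nonempty vertex set, arcs join vertices of `V`, no loops. -/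
def GoodDigraph {α : Type*} (V : Finset α) (A : Finset (α × α)) : Prop :=
  V.Nonempty ∧ ∀ a ∈ A, a.1 ∈ V ∧ a.2 ∈ V ∧ a.1 ≠ a.2

/-- Outdegree of a vertex. -/
def outdeg {α : Type*} [DecidableEq α] (A : Finset (α × α)) (v : α) : ℕ :=
  (A.filter (fun a => a.1 = v)).card

/-- Indegree of a vertex. -/
def indeg {α : Type*} [DecidableEq α] (A : Finset (α × α)) (v : α) : ℕ :=
  (A.filter (fun a => a.2 = v)).card

/-- A linear vertex has indegree and outdegree equal to 1. -/
def LinearVertex {α : Type*} [DecidableEq α] (A : Finset (α × α)) (v : α) : Prop :=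
  indeg A v = 1 ∧ outdeg A v = 1

/-- The digraph is a directed `n`-cycle: its vertices can be listed
`v₁, …, vₙ` so that the arcs are exactly `(v₁,v₂), …, (vₙ,v₁)`. -/
def IsCycleDigraph {α : Type*} [DecidableEq α] (V : Finset α) (A : Finset (α × α)) : Prop :=
  ∃ l : List α, l.Nodup ∧ 2 ≤ l.length ∧ l.toFinset = V ∧ A = (l.zip (l.rotate 1)).toFinset

/-- A directed tree: every arc is accompanied by its reverse, and the
underlying undirected graph (on the vertex set `V`) is a tree. -/
def IsDirTree {α : Type*} [DecidableEq α] (V : Finset α) (A : Finset (α × α)) : Prop :=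
  (∀ u v : α, (u, v) ∈ A → (v, u) ∈ A) ∧
  (SimpleGraph.fromRel (fun a b : {x // x ∈ V} => ((a : α), (b : α)) ∈ A)).IsTree

/-- `(V', A')` is the (internal or external) expansion of `(V, A)` by the new
vertex `v`.  Internal: an arc `(u,w)` is replaced by `(u,v)` and `(v,w)`.
External: the arcs `(u,v)` and `(v,w)` are added for vertices `u, w ∈ V`. -/
def IsExpansionBy {α : Type*} [DecidableEq α] (v : α) (V : Finset α) (A : Finset (α × α))
    (V' : Finset α) (A' : Finset (α × α)) : Prop :=
  v ∉ V ∧ V' = insert v V ∧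
    ((∃ u w, (u, w) ∈ A ∧ A' = insert (u, v) (insert (v, w) (A.erase (u, w)))) ∨
     (∃ u ∈ V, ∃ w ∈ V, A' = insert (u, v) (insert (v, w) A)))

/-!
Contracting the linear vertex `v` onto `w` sends every walk of `D*` between vertices other
than `v` to a walk of `D`, so `D` is strongly connected. Conversely, a walk of `D` minus an old
arc `a` becomes a walk of `D* - a` after subdividing `(u, w)` back into `u, v, w`; together with
the arcs `(u, v)`, `(v, w)` this would make `D* - a` strongly connected. Finally `D - (u, w)`
cannot be strongly connected, since a `u`–`w` path in it would be a path of `D*` avoiding `v`.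
-/

section Smoothing

variable {α : Type*}

theorem Reach.exists_isPath {A : Finset (α × α)} {x y : α} (h : Reach A x y) :
    ∃ l, IsPath A x y l := by
  induction h using Relation.ReflTransGen.head_induction_on with
  | refl => exact ⟨[y], List.isChain_singleton _, rfl, rfl, List.nodup_singleton _⟩
  | @head a c hac _ ih =>
    obtain ⟨l, hchain, hhead, hlast, hnodup⟩ := ih
    by_cases hal : a ∈ l
    · -- shortcut the cycle through `a`
      obtain ⟨s, t, rfl⟩ := List.append_of_mem hal
      refine ⟨a :: t, hchain.suffix ⟨s, rfl⟩, rfl, ?_, hnodup.sublist (List.sublist_append_right s _)⟩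
      rwa [← List.getLast?_append_cons s a t]
    · have hl : l ≠ [] := by rintro rfl; simp at hhead
      refine ⟨a :: l, List.isChain_cons.2 ⟨fun b hb => ?_, hchain⟩, rfl, ?_, hnodup.cons hal⟩
      · rw [hhead, Option.mem_some_iff] at hb
        exact hb ▸ hac
      · rwa [List.getLast?_cons_of_ne_nil hl]

theorem IsPath.mono {A B : Finset (α × α)} {x y : α} {l : List α} (hAB : A ⊆ B)
    (h : IsPath A x y l) : IsPath B x y l :=
  ⟨h.1.imp fun _ _ hab => hAB hab, h.2⟩

theorem Reach.mono {A B : Finset (α × α)} {x y : α} (hAB : A ⊆ B) (h : Reach A x y) :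
    Reach B x y :=
  Relation.ReflTransGen.mono (fun _ _ hab => hAB hab) _ _ h

theorem not_reach_erase_of_forall_isPath [DecidableEq α] {A : Finset (α × α)} {u v w : α}
    (hpath : ∀ l, IsPath A u w l → l = [u, v, w]) : ¬ Reach (A.erase (u, v)) u w := by
  intro h
  obtain ⟨l, hl⟩ := h.exists_isPath
  obtain rfl := hpath l (hl.mono (Finset.erase_subset _ _))
  exact Finset.notMem_erase _ _ (List.isChain_cons_cons.1 hl.1).1

theorem StrongConn.of_erase [DecidableEq α] {V : Finset α} {A : Finset (α × α)} {u v w : α}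
    (h : StrongConn (V.erase v) A) (huv : (u, v) ∈ A) (hvw : (v, w) ∈ A)
    (hu : u ∈ V.erase v) (hw : w ∈ V.erase v) : StrongConn V A := by
  intro x hx y hy
  by_cases hxv : x = v
  · by_cases hyv : y = v
    · exact hxv ▸ hyv ▸ Relation.ReflTransGen.refl
    · exact hxv ▸ Relation.ReflTransGen.head hvw (h w hw y (Finset.mem_erase.2 ⟨hyv, hy⟩))
  · by_cases hyv : y = v
    · exact hyv ▸ Relation.ReflTransGen.tail (h x (Finset.mem_erase.2 ⟨hxv, hx⟩) u hu) huv
    · exact h x (Finset.mem_erase.2 ⟨hxv, hx⟩) y (Finset.mem_erase.2 ⟨hyv, hy⟩)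

theorem Reach.of_subdivide {B C : Finset (α × α)} {u v w x y : α}
    (hBC : ∀ p ∈ B, p = (u, w) ∨ p ∈ C) (huv : (u, v) ∈ C) (hvw : (v, w) ∈ C)
    (h : Reach B x y) : Reach C x y := by
  refine Relation.reflTransGen_closed (fun p q hpq => ?_) _ _ h
  rcases hBC _ hpq with hpq | hpq
  · obtain ⟨rfl, rfl⟩ := Prod.mk.inj hpq
    exact Relation.ReflTransGen.tail (Relation.ReflTransGen.single huv) hvw
  · exact Relation.ReflTransGen.single hpq

variable [DecidableEq α]

def smooth (A : Finset (α × α)) (u v w : α) : Finset (α × α) :=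
  insert (u, w) ((A.erase (u, v)).erase (v, w))

theorem mem_smooth_of_mem {A : Finset (α × α)} {u v w p q : α} (hpq : (p, q) ∈ A)
    (hp : p ≠ v) (hq : q ≠ v) : (p, q) ∈ smooth A u v w := by
  refine Finset.mem_insert_of_mem (Finset.mem_erase.2 ⟨?_, Finset.mem_erase.2 ⟨?_, hpq⟩⟩)
  · exact fun h => hp (Prod.mk.inj h).1
  · exact fun h => hq (Prod.mk.inj h).2

theorem mem_of_mem_smooth {A : Finset (α × α)} {u v w : α} {p : α × α}
    (hp : p ∈ smooth A u v w) : p = (u, w) ∨ p ∈ A :=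
  (Finset.mem_insert.1 hp).imp_right fun h => Finset.mem_of_mem_erase (Finset.mem_of_mem_erase h)

theorem Reach.to_smooth {A : Finset (α × α)} {u v w x y : α} (huv : u ≠ v) (hvw : v ≠ w)
    (hin : ∀ x, (x, v) ∈ A → x = u) (hout : ∀ x, (v, x) ∈ A → x = w)
    (hx : x ≠ v) (hy : y ≠ v) (h : Reach A x y) : Reach (smooth A u v w) x y := by
  let contract : α → α := fun z => if z = v then w else z
  have hcontract : ∀ z, z ≠ v → contract z = z := fun z hz => if_neg hz
  suffices Reach (smooth A u v w) (contract x) (contract y) by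
    rwa [hcontract x hx, hcontract y hy] at this
  refine Relation.ReflTransGen.lift' contract (fun p q hpq => ?_) _ _ h
  by_cases hp : p = v
  · obtain rfl := hout q (hp ▸ hpq)
    simp only [Function.onFun, contract, if_pos hp, if_neg hvw.symm]
    exact Relation.ReflTransGen.refl
  by_cases hq : q = v
  · obtain rfl := hin p (hq ▸ hpq)
    simp only [Function.onFun, contract, if_pos hq, if_neg huv]
    exact Relation.ReflTransGen.single (Finset.mem_insert_self _ _)
  · simp only [Function.onFun, contract, if_neg hp, if_neg hq]
    exact Relation.ReflTransGen.single (mem_smooth_of_mem hpq hp hq)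

end Smoothing

theorem stmt_14_general {α : Type*} [DecidableEq α] (V : Finset α) (A : Finset (α × α))
    (hg : GoodDigraph V A) (h : MSC V A) (v u w : α)
    (huv : (u, v) ∈ A) (hvw : (v, w) ∈ A)
    (hin : ∀ x, (x, v) ∈ A → x = u) (hout : ∀ x, (v, x) ∈ A → x = w)
    (hpath : ∀ l, IsPath A u w l → l = [u, v, w]) :
    MSC (V.erase v) (insert (u, w) ((A.erase (u, v)).erase (v, w))) := by
  obtain ⟨huV, -, hunv⟩ := hg.2 _ huv
  obtain ⟨-, hwV, hvnw⟩ := hg.2 _ hvw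
  have hu : u ∈ V.erase v := Finset.mem_erase.2 ⟨hunv, huV⟩
  have hw : w ∈ V.erase v := Finset.mem_erase.2 ⟨hvnw.symm, hwV⟩
  change MSC (V.erase v) (smooth A u v w)
  refine ⟨fun x hx y hy => Reach.to_smooth hunv hvnw hin hout (Finset.ne_of_mem_erase hx)
    (Finset.ne_of_mem_erase hy) (h.1 x (Finset.mem_of_mem_erase hx) y (Finset.mem_of_mem_erase hy)),
    fun a ha hconn => ?_⟩
  by_cases hauw : a = (u, w)
  · subst hauw
    refine not_reach_erase_of_forall_isPath hpath (Reach.mono (fun p hp => ?_) (hconn u hu w hw))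
    obtain ⟨hpuw, hp⟩ := Finset.mem_erase.1 hp
    exact Finset.mem_of_mem_erase ((Finset.mem_insert.1 hp).resolve_left hpuw)
  · obtain ⟨havw, hauv, haA⟩ : a ≠ (v, w) ∧ a ≠ (u, v) ∧ a ∈ A := by
      simpa only [Finset.mem_erase] using (Finset.mem_insert.1 ha).resolve_left hauw
    have huv' : (u, v) ∈ A.erase a := Finset.mem_erase.2 ⟨Ne.symm hauv, huv⟩
    have hvw' : (v, w) ∈ A.erase a := Finset.mem_erase.2 ⟨Ne.symm havw, hvw⟩
    refine h.2 a haA (StrongConn.of_erase (fun x hx y hy => ?_) huv' hvw' hu hw)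
    refine Reach.of_subdivide (fun p hp => ?_) huv' hvw' (hconn x hx y hy)
    obtain ⟨hpa, hp⟩ := Finset.mem_erase.1 hp
    exact (mem_of_mem_smooth hp).imp_right fun hpA => Finset.mem_erase.2 ⟨hpa, hpA⟩

/-- if `v` is a linear vertex of an MSC digraph with unique
in-neighbor `u` and unique out-neighbor `w`, `u ≠ w`, and the only directed
path from `u` to `w` is `u, v, w`, then deleting `v` with its two arcs and
adding the arc `(u,w)` yields an MSC digraph. -/
theorem stmt_14 {α : Type*} [DecidableEq α] (V : Finset α) (A : Finset (α × α))
    (hg : GoodDigraph V A) (h : MSC V A) (v u w : α)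
    (huv : (u, v) ∈ A) (hvw : (v, w) ∈ A)
    (hin : ∀ x, (x, v) ∈ A → x = u) (hout : ∀ x, (v, x) ∈ A → x = w)
    (huw : u ≠ w)
    (hpath : ∀ l, IsPath A u w l → l = [u, v, w]) :
    MSC (V.erase v) (insert (u, w) ((A.erase (u, v)).erase (v, w))) :=
  stmt_14_general V A hg h v u w huv hvw hin hout hpath
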